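/- Let X be a real random variable with probability density f(x) = K₀(|x|)/π and let m₀(α) := E[tanh(αX)·X]. Then for every α ∈ [0, 0.31), α - 3α³ ≤ m₀(α) ≤ α - 3α³/(1 + 8α). -/

import Mathlib

open Real MeasureTheory

/-- Modified Bessel function of the second kind of order 0, via its integral
representation `K₀(x) = ∫₀^∞ exp(-x cosh t) dt`. -/
noncomputable def besselK0 (x : ℝ) : ℝ :=
  ∫ t in Set.Ioi (0 : ℝ), Real.exp (-x * Real.cosh t)

/-- The probability density `x ↦ K₀(|x|)/π` on ℝ. -/
noncomputable def besselDensity (x : ℝ) : ℝ := besselK0 |x| / Real.pi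

/-- The expectation `m₀(α) = E[tanh(αX)·X]`. -/
noncomputable def m0Exp (α : ℝ) : ℝ :=
  ∫ x : ℝ, Real.tanh (α * x) * x * besselDensity x

/-!
On `[0, ∞)` one has `y - y³/3 ≤ tanh y ≤ y - y³/(3(1 + y²))`, both by monotonicity of the
difference. Bounding `1/(1 + y²)` from below by its tangent line `2l - l²(1 + y²)` makes the upper
bound polynomial, so integrating `tanh (α x) x` against the density reduces both bounds to the
moments `E X² = 1`, `E X⁴ = 9`, `E X⁶ = 225`. The minimizing choice `l = 1/(1 + 25α²)` gives
`m₀(α) ≤ α - 3α³/(1 + 25α²)`, and `25α² ≤ 8α` for `α ≤ 8/25`.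

The moments come from Fubini, `∫₀^∞ xᵏ K₀(x) dx = k! ∫₀^∞ sechᵏ⁺¹ t dt`, and the integration by
parts `(k + 1) ∫₀^∞ sechᵏ⁺² = k ∫₀^∞ sechᵏ`, which give `E X^(k+2) = (k + 1)² E Xᵏ` for even `k`.
-/

open Set Filter Topology
open scoped Nat

theorem apply_zero_le_of_hasDerivAt_nonneg {f f' : ℝ → ℝ} (hf : ∀ x, HasDerivAt f (f' x) x)
    (hf' : ∀ x, 0 < x → 0 ≤ f' x) {y : ℝ} (hy : 0 ≤ y) : f 0 ≤ f y := by
  refine monotoneOn_of_hasDerivWithinAt_nonneg (convex_Ici 0)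
    (fun x _ => (hf x).continuousAt.continuousWithinAt)
    (fun x _ => (hf x).hasDerivWithinAt) (fun x hx => hf' x ?_) self_mem_Ici hy hy
  simpa using hx

namespace Real

theorem hasDerivAt_tanh (x : ℝ) : HasDerivAt tanh (1 - tanh x ^ 2) x := by
  rw [show tanh = fun y => sinh y / cosh y from funext tanh_eq_sinh_div_cosh]
  refine ((hasDerivAt_sinh x).fun_div (hasDerivAt_cosh x) (cosh_pos x).ne').congr_deriv ?_
  field_simp

@[fun_prop]
theorem continuous_tanh : Continuous tanh :=
  continuous_iff_continuousAt.2 fun x => (hasDerivAt_tanh x).continuousAt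

theorem tanh_nonneg {y : ℝ} (hy : 0 ≤ y) : 0 ≤ tanh y := by
  rw [tanh_eq_sinh_div_cosh]
  exact div_nonneg (sinh_nonneg_iff.2 hy) (cosh_pos y).le

theorem tanh_le_self {y : ℝ} (hy : 0 ≤ y) : tanh y ≤ y := by
  have := apply_zero_le_of_hasDerivAt_nonneg (fun x => (hasDerivAt_id x).sub (hasDerivAt_tanh x))
    (fun x _ => by simp only [sub_sub_cancel]; positivity) hy
  simpa using this

theorem sub_pow_three_div_three_le_tanh {y : ℝ} (hy : 0 ≤ y) : y - y ^ 3 / 3 ≤ tanh y := by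
  have := apply_zero_le_of_hasDerivAt_nonneg (f := fun x => tanh x - x + x ^ 3 / 3)
    (f' := fun x => x ^ 2 - tanh x ^ 2)
    (fun x => (((hasDerivAt_tanh x).sub (hasDerivAt_id x)).add
      ((hasDerivAt_pow 3 x).div_const 3)).congr_deriv (by norm_num; ring))
    (fun x hx => by
      have := tanh_nonneg hx.le
      have := tanh_le_self hx.le
      nlinarith) hy
  simp only [tanh_zero] at this
  linarith

theorem tanh_le_sub_pow_three_div {y : ℝ} (hy : 0 ≤ y) :
    tanh y ≤ y - y ^ 3 / (3 * (1 + y ^ 2)) := by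
  have := apply_zero_le_of_hasDerivAt_nonneg
    (f := fun x => x * (3 + 2 * x ^ 2) - 3 * (1 + x ^ 2) * tanh x)
    (f' := fun x => 3 * (x - tanh x) ^ 2 + 3 * x ^ 2 * tanh x ^ 2)
    (fun x => (((hasDerivAt_id x).mul (((hasDerivAt_pow 2 x).const_mul 2).const_add 3)).sub
      ((((hasDerivAt_pow 2 x).const_add 1).const_mul 3).mul (hasDerivAt_tanh x))).congr_deriv
      (by norm_num; ring))
    (fun x _ => by positivity) hy
  simp only [tanh_zero] at this
  rw [le_sub_iff_add_le, ← le_sub_iff_add_le', div_le_iff₀ (by positivity)]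
  linarith

theorem tanh_le_quintic (l : ℝ) {y : ℝ} (hy : 0 ≤ y) :
    tanh y ≤ y - (2 * l - l ^ 2) / 3 * y ^ 3 + l ^ 2 / 3 * y ^ 5 := by
  have hc : 0 < 1 + y ^ 2 := by positivity
  have htangent : 2 * l - l ^ 2 * (1 + y ^ 2) ≤ 1 / (1 + y ^ 2) := by
    rw [le_div_iff₀ hc]
    nlinarith [sq_nonneg (1 - l * (1 + y ^ 2))]
  calc tanh y ≤ y - y ^ 3 / (3 * (1 + y ^ 2)) := tanh_le_sub_pow_three_div hy
    _ = y - y ^ 3 / 3 * (1 / (1 + y ^ 2)) := by field_simp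
    _ ≤ y - y ^ 3 / 3 * (2 * l - l ^ 2 * (1 + y ^ 2)) := by gcongr
    _ = _ := by ring

theorem tanh_mul_abs_mul_abs (α x : ℝ) : tanh (α * |x|) * |x| = tanh (α * x) * x := by
  rcases abs_choice x with h | h <;> simp [h, tanh_neg]

theorem sub_le_tanh_mul_mul {α : ℝ} (hα : 0 ≤ α) (x : ℝ) :
    α * x ^ 2 - α ^ 3 / 3 * x ^ 4 ≤ tanh (α * x) * x := by
  have h := mul_le_mul_of_nonneg_right
    (sub_pow_three_div_three_le_tanh (mul_nonneg hα (abs_nonneg x))) (abs_nonneg x)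
  rw [tanh_mul_abs_mul_abs] at h
  rw [← sq_abs, ← Even.pow_abs ⟨2, rfl⟩]
  linear_combination h

theorem tanh_mul_mul_le {α : ℝ} (hα : 0 ≤ α) (l x : ℝ) :
    tanh (α * x) * x ≤
      α * x ^ 2 - α ^ 3 * (2 * l - l ^ 2) / 3 * x ^ 4 + α ^ 5 * l ^ 2 / 3 * x ^ 6 := by
  have h := mul_le_mul_of_nonneg_right
    (tanh_le_quintic l (mul_nonneg hα (abs_nonneg x))) (abs_nonneg x)
  rw [tanh_mul_abs_mul_abs] at h
  rw [← sq_abs, ← Even.pow_abs ⟨2, rfl⟩, ← Even.pow_abs ⟨3, rfl⟩]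
  linear_combination h

theorem tendsto_sinh_atTop : Tendsto sinh atTop atTop :=
  tendsto_atTop_mono' atTop ((eventually_ge_atTop 0).mono fun _ hx => self_le_sinh_iff.2 hx)
    tendsto_id

theorem tendsto_cosh_atTop : Tendsto cosh atTop atTop :=
  tendsto_atTop_mono (fun _ => (sinh_lt_cosh _).le) tendsto_sinh_atTop

theorem integrableOn_cosh_inv_pow {k : ℕ} (hk : k ≠ 0) :
    IntegrableOn (fun t => (cosh t)⁻¹ ^ k) (Ioi 0) := by
  refine ((exp_neg_integrableOn_Ioi 0 one_pos).const_mul 2).mono'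
    ((continuous_cosh.inv₀ fun t => (cosh_pos t).ne').pow k).aestronglyMeasurable
    (ae_of_all _ fun t => ?_)
  have hc := cosh_pos t
  calc ‖(cosh t)⁻¹ ^ k‖ = (cosh t)⁻¹ ^ k := norm_of_nonneg (by positivity)
    _ ≤ (cosh t)⁻¹ := pow_le_of_le_one (by positivity) (inv_le_one_of_one_le₀ (one_le_cosh t)) hk
    _ ≤ 2 * exp (-1 * t) := by
        rw [inv_le_iff_one_le_mul₀ hc, cosh_eq, neg_one_mul, exp_neg]
        have := exp_pos t
        field_simp
        nlinarith [exp_pos (-t)]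

theorem hasDerivAt_arctan_sinh (t : ℝ) :
    HasDerivAt (fun t => arctan (sinh t)) (cosh t)⁻¹ t := by
  refine ((hasDerivAt_arctan (sinh t)).comp t (hasDerivAt_sinh t)).congr_deriv ?_
  rw [← cosh_sq']
  field_simp

theorem integral_cosh_inv : ∫ t in Ioi 0, (cosh t)⁻¹ = π / 2 := by
  have := integral_Ioi_of_hasDerivAt_of_tendsto' (fun t _ => hasDerivAt_arctan_sinh t)
    (by simpa using integrableOn_cosh_inv_pow one_ne_zero)
    ((tendsto_nhds_of_tendsto_nhdsWithin tendsto_arctan_atTop).comp tendsto_sinh_atTop)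
  simpa using this

theorem hasDerivAt_sinh_mul_cosh_inv_pow (n : ℕ) (t : ℝ) :
    HasDerivAt (fun t => sinh t * (cosh t)⁻¹ ^ (n + 1))
      ((n + 1) * (cosh t)⁻¹ ^ (n + 2) - n * (cosh t)⁻¹ ^ n) t := by
  have hc := (cosh_pos t).ne'
  refine ((hasDerivAt_sinh t).mul (((hasDerivAt_cosh t).fun_inv hc).fun_pow (n + 1))).congr_deriv ?_
  have hcs : cosh t * (cosh t)⁻¹ = 1 := mul_inv_cancel₀ hc
  rw [Nat.add_sub_cancel, div_eq_mul_inv _ (cosh t ^ 2), ← inv_pow]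
  push_cast
  linear_combination ((cosh t)⁻¹ ^ n * (1 - (n + 1) * (cosh t * (cosh t)⁻¹ + 1))) * hcs
    - ((n + 1) * (cosh t)⁻¹ ^ (n + 2)) * sinh_sq t

theorem tendsto_sinh_mul_cosh_inv_pow {n : ℕ} (hn : n ≠ 0) :
    Tendsto (fun t => sinh t * (cosh t)⁻¹ ^ (n + 1)) atTop (𝓝 0) := by
  have hs : Tendsto (fun t => (cosh t)⁻¹ ^ n) atTop (𝓝 0) := by
    simpa [zero_pow hn] using (tendsto_inv_atTop_zero.comp tendsto_cosh_atTop).pow n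
  refine squeeze_zero_norm (fun t => ?_) hs
  have hc := cosh_pos t
  rw [pow_succ', ← mul_assoc, ← div_eq_mul_inv, ← tanh_eq_sinh_div_cosh, norm_mul,
    norm_of_nonneg (by positivity : 0 ≤ (cosh t)⁻¹ ^ n)]
  exact mul_le_of_le_one_left (by positivity) (abs_tanh_lt_one t).le

theorem integral_cosh_inv_pow_add_two {n : ℕ} (hn : n ≠ 0) :
    (n + 1) * ∫ t in Ioi 0, (cosh t)⁻¹ ^ (n + 2) = n * ∫ t in Ioi 0, (cosh t)⁻¹ ^ n := by
  have h2 := (integrableOn_cosh_inv_pow (n + 1).succ_ne_zero).const_mul (n + 1 : ℝ)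
  have h0 := (integrableOn_cosh_inv_pow hn).const_mul (n : ℝ)
  have := integral_Ioi_of_hasDerivAt_of_tendsto' (fun t _ => hasDerivAt_sinh_mul_cosh_inv_pow n t)
    (h2.sub h0) (tendsto_sinh_mul_cosh_inv_pow hn)
  rw [integral_sub h2 h0, integral_const_mul, integral_const_mul] at this
  simpa [sub_eq_zero] using this

end Real

theorem integrableOn_pow_mul_exp_neg_mul (k : ℕ) {c : ℝ} (hc : 0 < c) :
    IntegrableOn (fun x => x ^ k * exp (-x * c)) (Ioi 0) := by
  refine (integrableOn_rpow_mul_exp_neg_mul_rpow (s := k) (p := 1)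
    (by linarith [(k.cast_nonneg : (0 : ℝ) ≤ k)]) one_pos hc).congr_fun (fun x _ => ?_)
    measurableSet_Ioi
  simp only [rpow_natCast, rpow_one, neg_mul, mul_comm c]

theorem integral_pow_mul_exp_neg_mul (k : ℕ) {c : ℝ} (hc : 0 < c) :
    ∫ x in Ioi 0, x ^ k * exp (-x * c) = k ! / c ^ (k + 1) := by
  have h := integral_rpow_mul_exp_neg_mul_Ioi (a := k + 1) (by positivity) hc
  rw [add_sub_cancel_right, Gamma_nat_eq_factorial, ← Nat.cast_succ, rpow_natCast] at h
  convert h using 1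
  · simp only [rpow_natCast, neg_mul, mul_comm c]
  · rw [one_div_pow, one_div, inv_mul_eq_div]

theorem integrable_pow_mul_exp_neg_mul_cosh (k : ℕ) :
    Integrable (fun p : ℝ × ℝ => p.1 ^ k * exp (-p.1 * cosh p.2))
      ((volume.restrict (Ioi 0)).prod (volume.restrict (Ioi 0))) := by
  have hcont : Continuous (fun p : ℝ × ℝ => p.1 ^ k * exp (-p.1 * cosh p.2)) := by fun_prop
  refine (integrable_prod_iff' hcont.aestronglyMeasurable).2 ⟨?_, ?_⟩
  · exact ae_of_all _ fun t => integrableOn_pow_mul_exp_neg_mul k (cosh_pos t)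
  · refine ((integrableOn_cosh_inv_pow k.succ_ne_zero).const_mul (k ! : ℝ)).congr ?_
    filter_upwards [ae_restrict_mem measurableSet_Ioi] with t _
    rw [← setIntegral_congr_fun measurableSet_Ioi fun x (hx : 0 < x) => (norm_of_nonneg
      (by positivity : 0 ≤ x ^ k * exp (-x * cosh t))).symm,
      integral_pow_mul_exp_neg_mul k (cosh_pos t), inv_pow, div_eq_mul_inv]

theorem integral_pow_mul_besselK0 (k : ℕ) :
    ∫ x in Ioi 0, x ^ k * besselK0 x = k ! * ∫ t in Ioi 0, (cosh t)⁻¹ ^ (k + 1) := by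
  simp_rw [besselK0, ← integral_const_mul]
  rw [integral_integral_swap (integrable_pow_mul_exp_neg_mul_cosh k)]
  refine setIntegral_congr_fun measurableSet_Ioi fun t _ => ?_
  rw [integral_pow_mul_exp_neg_mul k (cosh_pos t), inv_pow, div_eq_mul_inv]

theorem integrableOn_pow_mul_besselK0 (k : ℕ) :
    IntegrableOn (fun x => x ^ k * besselK0 x) (Ioi 0) := by
  have h := (integrable_pow_mul_exp_neg_mul_cosh k).integral_prod_left
  simp only [integral_const_mul] at h
  exact h

theorem stronglyMeasurable_besselK0 : StronglyMeasurable besselK0 :=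
  (show Continuous (fun p : ℝ × ℝ => exp (-p.1 * cosh p.2)) by fun_prop).stronglyMeasurable
    |>.integral_prod_right'

theorem MeasureTheory.IntegrableOn.comp_abs {E : Type*} [NormedAddCommGroup E] {f : ℝ → E}
    (hf : IntegrableOn f (Ioi 0)) : Integrable (fun x => f |x|) := by
  have hIoi : IntegrableOn (fun x => f |x|) (Ioi 0) :=
    hf.congr_fun (fun x hx => by rw [abs_of_pos hx]) measurableSet_Ioi
  have hIic : IntegrableOn (fun x => f |x|) (Iic 0) := by
    have hneg : MeasurableEmbedding fun x : ℝ => -x := (Homeomorph.neg ℝ).measurableEmbedding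
    rw [← Measure.map_neg_eq_self (volume : Measure ℝ), hneg.integrableOn_map_iff]
    simp_rw [Function.comp_def, abs_neg, neg_preimage, neg_Iic, neg_zero]
    exact (integrableOn_Ici_iff_integrableOn_Ioi).2 hIoi
  rw [← integrableOn_univ, ← Iic_union_Ioi (a := 0)]
  exact hIic.union hIoi

@[fun_prop]
theorem measurable_besselDensity : Measurable besselDensity :=
  (stronglyMeasurable_besselK0.measurable.comp measurable_abs).div_const π

theorem besselDensity_nonneg (x : ℝ) : 0 ≤ besselDensity x :=
  div_nonneg (integral_nonneg fun _ => (exp_pos _).le) pi_pos.le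

theorem integrable_abs_pow_mul_besselDensity (k : ℕ) :
    Integrable (fun x => |x| ^ k * besselDensity x) := by
  simpa only [besselDensity, mul_div_assoc] using
    IntegrableOn.comp_abs ((integrableOn_pow_mul_besselK0 k).div_const π)

theorem integrable_pow_mul_besselDensity {k : ℕ} (hk : Even k) :
    Integrable (fun x => x ^ k * besselDensity x) := by
  simpa only [hk.pow_abs] using integrable_abs_pow_mul_besselDensity k

theorem integral_pow_mul_besselDensity {k : ℕ} (hk : Even k) :
    ∫ x, x ^ k * besselDensity x = 2 * k ! / π * ∫ t in Ioi 0, (cosh t)⁻¹ ^ (k + 1) := by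
  have h := integral_comp_abs (f := fun y => y ^ k * besselK0 y / π)
  simp only [hk.pow_abs, integral_div, integral_pow_mul_besselK0] at h
  simp only [besselDensity, ← mul_div_assoc, integral_div, h]
  ring

theorem integral_besselDensity : ∫ x, besselDensity x = 1 := by
  have h := integral_pow_mul_besselDensity ⟨0, rfl⟩
  simp only [pow_zero, one_mul, zero_add, pow_one, integral_cosh_inv, Nat.factorial_zero,
    Nat.cast_one] at h
  rw [h]
  field_simp

theorem integral_pow_add_two_mul_besselDensity {k : ℕ} (hk : Even k) :
    ∫ x, x ^ (k + 2) * besselDensity x = (k + 1) ^ 2 * ∫ x, x ^ k * besselDensity x := by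
  have hrec := integral_cosh_inv_pow_add_two (n := k + 1) k.succ_ne_zero
  rw [integral_pow_mul_besselDensity hk, integral_pow_mul_besselDensity (hk.add even_two),
    show (k + 2)! = (k + 2) * (k + 1) * (k !) by simp only [Nat.factorial_succ]; ring]
  push_cast at hrec ⊢
  linear_combination (2 * (k + 1) * k ! / π) * hrec

/-- At `n = 0` the truncated `2 * n - 1` is `0`, and `0‼ = 1` plays the role of `(-1)‼`. -/
theorem integral_pow_two_mul_mul_besselDensity (n : ℕ) :
    ∫ x, x ^ (2 * n) * besselDensity x = ((2 * n - 1)‼ : ℝ) ^ 2 := by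
  induction n with
  | zero => simpa using integral_besselDensity
  | succ n ih =>
    rw [mul_add, mul_one, integral_pow_add_two_mul_besselDensity (even_two_mul n), ih]
    rcases n with _ | n
    · simp
    · rw [show 2 * (n + 1) + 2 - 1 = 2 * n + 1 + 2 by omega, Nat.doubleFactorial_add_two,
        show 2 * (n + 1) - 1 = 2 * n + 1 by omega]
      push_cast
      ring

theorem integrable_even_poly_mul_besselDensity (a b c : ℝ) :
    Integrable (fun x => (a * x ^ 2 + b * x ^ 4 + c * x ^ 6) * besselDensity x) := by
  simp only [add_mul, mul_assoc]
  exact (((integrable_pow_mul_besselDensity (k := 2) ⟨1, rfl⟩).const_mul a).add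
    ((integrable_pow_mul_besselDensity (k := 4) ⟨2, rfl⟩).const_mul b)).add
    ((integrable_pow_mul_besselDensity (k := 6) ⟨3, rfl⟩).const_mul c)

theorem integral_even_poly_mul_besselDensity (a b c : ℝ) :
    ∫ x, (a * x ^ 2 + b * x ^ 4 + c * x ^ 6) * besselDensity x = a + 9 * b + 225 * c := by
  have h2 := (integrable_pow_mul_besselDensity (k := 2) ⟨1, rfl⟩).const_mul a
  have h4 := (integrable_pow_mul_besselDensity (k := 4) ⟨2, rfl⟩).const_mul b
  have h6 := (integrable_pow_mul_besselDensity (k := 6) ⟨3, rfl⟩).const_mul c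
  have hM2 := integral_pow_two_mul_mul_besselDensity 1
  have hM4 := integral_pow_two_mul_mul_besselDensity 2
  have hM6 := integral_pow_two_mul_mul_besselDensity 3
  norm_num [Nat.doubleFactorial] at hM2 hM4 hM6
  simp only [add_mul, mul_assoc]
  rw [integral_add (h2.fun_add h4) h6, integral_add h2 h4, integral_const_mul, integral_const_mul,
    integral_const_mul, hM2, hM4, hM6]
  ring

theorem integrable_tanh_mul_mul_besselDensity (α : ℝ) :
    Integrable (fun x => tanh (α * x) * x * besselDensity x) := by
  refine (integrable_abs_pow_mul_besselDensity 1).mono' (by fun_prop) (ae_of_all _ fun x => ?_)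
  rw [norm_mul, norm_mul, pow_one, norm_of_nonneg (besselDensity_nonneg x), Real.norm_eq_abs]
  exact mul_le_mul_of_nonneg_right (mul_le_of_le_one_left (abs_nonneg x) (abs_tanh_lt_one _).le)
    (besselDensity_nonneg x)

theorem sub_le_m0Exp {α : ℝ} (hα : 0 ≤ α) : α - 3 * α ^ 3 ≤ m0Exp α :=
  calc α - 3 * α ^ 3
        = ∫ x, (α * x ^ 2 + -(α ^ 3 / 3) * x ^ 4 + 0 * x ^ 6) * besselDensity x := by
        rw [integral_even_poly_mul_besselDensity]; ring
    _ ≤ m0Exp α := integral_mono (integrable_even_poly_mul_besselDensity _ _ _)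
        (integrable_tanh_mul_mul_besselDensity α) fun x => mul_le_mul_of_nonneg_right
          (by linarith [sub_le_tanh_mul_mul hα x]) (besselDensity_nonneg x)

theorem m0Exp_le {α : ℝ} (hα : 0 ≤ α) (l : ℝ) :
    m0Exp α ≤ α - 3 * α ^ 3 * (2 * l - l ^ 2) + 75 * α ^ 5 * l ^ 2 :=
  calc m0Exp α ≤ ∫ x, (α * x ^ 2 + -(α ^ 3 * (2 * l - l ^ 2) / 3) * x ^ 4
        + α ^ 5 * l ^ 2 / 3 * x ^ 6) * besselDensity x :=
        integral_mono (integrable_tanh_mul_mul_besselDensity α)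
          (integrable_even_poly_mul_besselDensity _ _ _) fun x => mul_le_mul_of_nonneg_right
            (by linarith [tanh_mul_mul_le hα l x]) (besselDensity_nonneg x)
    _ = _ := by rw [integral_even_poly_mul_besselDensity]; ring

theorem m0Exp_bounds (α : ℝ) (hα : α ∈ Set.Ico (0 : ℝ) 0.31) :
    α - 3 * α ^ 3 ≤ m0Exp α ∧ m0Exp α ≤ α - 3 * α ^ 3 / (1 + 8 * α) := by
  obtain ⟨hα0, hα1⟩ := hα
  refine ⟨sub_le_m0Exp hα0, ?_⟩
  have h25 : 0 < 1 + 25 * α ^ 2 := by positivity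
  calc m0Exp α ≤ α - 3 * α ^ 3 * (2 * (1 + 25 * α ^ 2)⁻¹ - (1 + 25 * α ^ 2)⁻¹ ^ 2)
        + 75 * α ^ 5 * (1 + 25 * α ^ 2)⁻¹ ^ 2 := m0Exp_le hα0 _
    _ = α - 3 * α ^ 3 / (1 + 25 * α ^ 2) := by field_simp; ring
    _ ≤ α - 3 * α ^ 3 / (1 + 8 * α) := by
        norm_num at hα1
        exact sub_le_sub_left (div_le_div_of_nonneg_left (by positivity) h25 (by nlinarith)) α
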